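/- Let Γ be a simplicial complex on [n] and 1 ≤ i < j ≤ n. If the Stanley–Reisner ideal I_Γ has no minimal monomial generator divisible by x_i x_j, then in(φ_{ij}(I_Γ)) = I_{Shift_{ij}(Γ)}, where in(−) denotes the initial ideal with respect to the degree reverse lexicographic order induced by x_1 > ⋯ > x_n. -/

import Mathlib

/-! Combinatorics of simplicial complexes on subsets of ℕ (vertex set `[n] = Finset.Icc 1 n`). -/

/-- `Γ` is a simplicial complex on the vertex set `V`. -/
def SimplicialComplexOn (V : Finset ℕ) (Γ : Set (Finset ℕ)) : Prop :=
  (∀ F ∈ Γ, F ⊆ V) ∧ (∀ v ∈ V, ({v} : Finset ℕ) ∈ Γ) ∧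
    (∀ F ∈ Γ, ∀ G, G ⊆ F → G ∈ Γ)

/-- The dimension of a simplicial complex, as an integer (`dim Γ = max {|F| - 1 : F ∈ Γ}`). -/
noncomputable def sdim (Γ : Set (Finset ℕ)) : ℤ :=
  sSup ((fun F : Finset ℕ => (F.card : ℤ) - 1) '' Γ)

/-- A facet of `Γ` is a maximal face. -/
def IsFacet (Γ : Set (Finset ℕ)) (F : Finset ℕ) : Prop :=
  F ∈ Γ ∧ ∀ G ∈ Γ, F ⊆ G → F = G

/-- A complex is pure if all of its facets have the same cardinality. -/
def PureComplex (Γ : Set (Finset ℕ)) : Prop :=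
  ∀ F G, IsFacet Γ F → IsFacet Γ G → F.card = G.card

/-- `fvec Γ k` is the number of faces of `Γ` of cardinality `k`, i.e. `f_{k-1}(Γ)`. -/
noncomputable def fvec (Γ : Set (Finset ℕ)) (k : ℕ) : ℕ :=
  {F ∈ Γ | F.card = k}.ncard

/-- The `h`-vector of a `(d-1)`-dimensional complex:
`h_i = ∑_{j=0}^i (-1)^{i-j} binom(d-j, d-i) f_{j-1}`. -/
noncomputable def hvec (d : ℕ) (Γ : Set (Finset ℕ)) (i : ℕ) : ℤ :=
  ∑ j ∈ Finset.range (i + 1),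
    (-1 : ℤ) ^ (i - j) * (Nat.choose (d - j) (d - i) : ℤ) * (fvec Γ j : ℤ)

/-- The link of `Γ` with respect to a face `F`. -/
def linkOf (Γ : Set (Finset ℕ)) (F : Finset ℕ) : Set (Finset ℕ) :=
  {G | Disjoint G F ∧ G ∪ F ∈ Γ}

/-- The contraction of `Γ` with respect to `{i,j}`, identifying vertex `i` with `j`. -/
def contraction (Γ : Set (Finset ℕ)) (i j : ℕ) : Set (Finset ℕ) :=
  {F | F ∈ Γ ∧ i ∉ F} ∪ {G | ∃ F ∈ Γ, i ∈ F ∧ G = F.erase i ∪ {j}}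

/-- The Link condition: `lk_Γ({i}) ∩ lk_Γ({j}) = lk_Γ({i,j})`. -/
def LinkCondition (Γ : Set (Finset ℕ)) (i j : ℕ) : Prop :=
  linkOf Γ {i} ∩ linkOf Γ {j} = linkOf Γ {i, j}

open Classical in
/-- The shift operator `C_{ij}` on faces. -/
noncomputable def shiftMap (Γ : Set (Finset ℕ)) (i j : ℕ) (F : Finset ℕ) : Finset ℕ :=
  if i ∈ F ∧ j ∉ F ∧ F.erase i ∪ {j} ∉ Γ then F.erase i ∪ {j} else F

/-- `Shift_{ij}(Γ) = {C_{ij}(F) : F ∈ Γ}`. -/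
noncomputable def shiftComplex (Γ : Set (Finset ℕ)) (i j : ℕ) : Set (Finset ℕ) :=
  (shiftMap Γ i j) '' Γ

/-- The join `W * Σ = {F ∪ G : F ⊆ W, G ∈ Σ}` of a vertex set with a complex. -/
def joinW (W : Finset ℕ) (C : Set (Finset ℕ)) : Set (Finset ℕ) :=
  {H | ∃ F ⊆ W, ∃ G ∈ C, H = F ∪ G}

/-- Strong edge decomposability: boundaries of simplices and `{∅}` are strongly edge
decomposable, and recursively, a pure complex satisfying the Link condition w.r.t. an edge
`{i,j}` whose contraction and link are strongly edge decomposable is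
strongly edge decomposable. -/
inductive StronglyEdgeDecomposable : Set (Finset ℕ) → Prop
  | trivialComplex : StronglyEdgeDecomposable {(∅ : Finset ℕ)}
  | simplexBoundary (V : Finset ℕ) (hV : V.Nonempty) :
      StronglyEdgeDecomposable {F | F ⊆ V ∧ F ≠ V}
  | contract (Γ : Set (Finset ℕ)) (i j : ℕ) (hij : i < j)
      (hpure : PureComplex Γ) (hedge : ({i, j} : Finset ℕ) ∈ Γ)
      (hlc : LinkCondition Γ i j)
      (hcon : StronglyEdgeDecomposable (contraction Γ i j))
      (hlk : StronglyEdgeDecomposable (linkOf Γ {i, j})) :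
      StronglyEdgeDecomposable Γ

/-- A shifted complex: `F ∈ Γ`, `i ∈ F`, `i < j`, `j ∈ V` imply `(F \ {i}) ∪ {j} ∈ Γ`. -/
def ShiftedComplex (V : Finset ℕ) (Γ : Set (Finset ℕ)) : Prop :=
  ∀ F ∈ Γ, ∀ i ∈ F, ∀ j, i < j → j ∈ V → insert j (F.erase i) ∈ Γ

/-- A `d`-subset `F ⊆ [n]` is admissible if `n - k ∉ F` implies `[n-d+k, n-k-1] ⊆ F`. -/
def Admissible (n d : ℕ) (F : Finset ℕ) : Prop :=
  F ⊆ Finset.Icc 1 n ∧ F.card = d ∧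
    ∀ k < n, (n - k) ∉ F → Finset.Icc (n - d + k) (n - k - 1) ⊆ F

/-- `Δ(n,d)`, the complex generated by all admissible `d`-subsets of `[n]`; by a theorem of
Kalai this is the symmetric algebraic shifted complex `Δˢ(C(n,d))` of the boundary complex of
the cyclic `d`-polytope with `n` vertices. -/
def DeltaC (n d : ℕ) : Set (Finset ℕ) :=
  if d = 0 then {(∅ : Finset ℕ)} else {G | ∃ F, Admissible n d F ∧ G ⊆ F}

/-- The increasing enumeration of `V`, as a map `{1, …, |V|} → V ⊆ ℕ` (identity elsewhere). -/
noncomputable def vlabel (V : Finset ℕ) (i : ℕ) : ℕ :=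
  if h : i - 1 < V.card then (((V.orderIsoOfFin rfl) ⟨i - 1, h⟩ : V) : ℕ) else i

/-- `Δ(V,d)`: the complex `Δ(|V|,d)` relabeled order-isomorphically onto the vertex set `V`. -/
noncomputable def DeltaV (V : Finset ℕ) (d : ℕ) : Set (Finset ℕ) :=
  (fun G : Finset ℕ => G.image (vlabel V)) '' DeltaC V.card d
/-! Squeezed balls and spheres (Kalai). Monomials on `[m]` are represented as multisets. -/

/-- `U` is a shifted order ideal of monomials on `[m]`: it contains `1` and all variables
`x_1,…,x_m`, is closed under divisibility, and `u·x_i ∈ U`, `i < j ≤ m` imply `u·x_j ∈ U`.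
(A monomial is encoded as the multiset of its variable indices.) -/
def IsShiftedOrderIdeal (m : ℕ) (U : Set (Multiset ℕ)) : Prop :=
  (∀ u ∈ U, ∀ i ∈ u, i ∈ Finset.Icc 1 m) ∧ (0 : Multiset ℕ) ∈ U ∧
    (∀ i ∈ Finset.Icc 1 m, ({i} : Multiset ℕ) ∈ U) ∧
    (∀ u ∈ U, ∀ v, v ≤ u → v ∈ U) ∧
    (∀ u : Multiset ℕ, ∀ i j : ℕ, i < j → j ≤ m → (i ::ₘ u) ∈ U → (j ::ₘ u) ∈ U)

/-- For a monomial `u = x_{i_1}⋯x_{i_k}` (`i_1 ≤ … ≤ i_k`), the `(d+1)`-set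
`F_d(u) = {i_1, i_1+1} ∪ {i_2+2, i_2+3} ∪ ⋯ ∪ {i_k+2(k-1), i_k+2k-1} ∪ [n+2k-d, n]`. -/
noncomputable def Fd (n d : ℕ) (u : Multiset ℕ) : Finset ℕ :=
  (Finset.range (Multiset.card u)).biUnion
      (fun j => {(u.sort (· ≤ ·)).getD j 0 + 2 * j, (u.sort (· ≤ ·)).getD j 0 + 2 * j + 1}) ∪
    Finset.Icc (n + 2 * Multiset.card u - d) n

/-- The squeezed `d`-ball `B_d(U)`: the complex generated by `{F_d(u) : u ∈ U}`. -/
def squeezedBall (n d : ℕ) (U : Set (Multiset ℕ)) : Set (Finset ℕ) :=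
  {G | ∃ u ∈ U, G ⊆ Fd n d u}

/-- The boundary of a pure `d`-dimensional complex `B`: the subcomplex generated by the
`(d-1)`-dimensional faces (cardinality-`d` faces) contained in exactly one facet. -/
noncomputable def complexBoundary (d : ℕ) (B : Set (Finset ℕ)) : Set (Finset ℕ) :=
  {F | ∃ G, F ⊆ G ∧ G ∈ B ∧ G.card = d ∧
    {H | H ∈ B ∧ H.card = d + 1 ∧ G ⊆ H}.ncard = 1}

/-- The squeezed `(d-1)`-sphere `S_d(U) = ∂ B_d(U)`. -/
noncomputable def squeezedSphere (n d : ℕ) (U : Set (Multiset ℕ)) : Set (Finset ℕ) :=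
  complexBoundary d (squeezedBall n d U)

/-! The Stanley–Reisner ideal, the degree reverse lexicographic order, initial ideals and
generic initial ideals in the polynomial ring `K[x_1,…,x_n]`, realized as
`MvPolynomial (Fin n) K` with the variable `x_i` being `X ⟨i-1⟩`. -/

/-- The squarefree monomial `x_F = ∏_{i ∈ F} x_i` (variable `x_i`, `1 ≤ i ≤ n`, is `X ⟨i-1⟩`). -/
noncomputable def faceMonomial (K : Type*) [CommRing K] (n : ℕ) (F : Finset ℕ) :
    MvPolynomial (Fin n) K :=
  ∏ a ∈ Finset.univ.filter (fun a : Fin n => (a : ℕ) + 1 ∈ F), MvPolynomial.X a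

/-- The Stanley–Reisner ideal of a complex `Γ` on `[n]`, generated by the squarefree
monomials `x_F` with `F ⊆ [n]`, `F ∉ Γ`. -/
noncomputable def srIdeal (K : Type*) [CommRing K] (n : ℕ) (Γ : Set (Finset ℕ)) :
    Ideal (MvPolynomial (Fin n) K) :=
  Ideal.span {f | ∃ F : Finset ℕ, F ⊆ Finset.Icc 1 n ∧ F ∉ Γ ∧ f = faceMonomial K n F}

/-- The degree reverse lexicographic order (induced by `x_1 > x_2 > ⋯`, smaller index =
bigger variable): `u < v` iff `deg u < deg v`, or degrees agree and at the largest index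
where `u, v` differ, `u` has the larger exponent. -/
def DegRevLexLT {σ : Type*} [LinearOrder σ] (u v : σ →₀ ℕ) : Prop :=
  (u.sum fun _ e => e) < (v.sum fun _ e => e) ∨
    ((u.sum fun _ e => e) = (v.sum fun _ e => e) ∧
      ∃ k, v k < u k ∧ ∀ l, k < l → u l = v l)

/-- The initial ideal of `I` w.r.t. the degree reverse lexicographic order: the ideal
spanned by the leading monomials of the elements of `I`. -/
noncomputable def initialIdeal {σ : Type*} [LinearOrder σ] {K : Type*} [Field K]
    (I : Ideal (MvPolynomial σ K)) : Ideal (MvPolynomial σ K) :=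
  Ideal.span {m | ∃ f ∈ I, ∃ u ∈ f.support, m = MvPolynomial.monomial u (1 : K) ∧
    ∀ v ∈ f.support, v ≠ u → DegRevLexLT v u}

/-- The linear change of coordinates of `K[x_1,…,x_n]` associated with a matrix `M`,
`x_j ↦ ∑_i M_{ij} x_i`. -/
noncomputable def genLin {K : Type*} [CommRing K] {n : ℕ} (M : Matrix (Fin n) (Fin n) K) :
    MvPolynomial (Fin n) K →ₐ[K] MvPolynomial (Fin n) K :=
  MvPolynomial.aeval (fun j => ∑ a : Fin n, MvPolynomial.C (M a j) * MvPolynomial.X a)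

/-- `J` is the generic initial ideal (w.r.t. degrevlex) of `I`: there is a nonempty Zariski
open subset `U ⊆ GL_n(K)` (the nonvanishing locus of a nonzero polynomial in the matrix
entries) such that `in(φ(I)) = J` for every `φ ∈ U`. -/
def IsGin {K : Type*} [Field K] {n : ℕ} (I J : Ideal (MvPolynomial (Fin n) K)) : Prop :=
  ∃ p : MvPolynomial (Fin n × Fin n) K, p ≠ 0 ∧
    ∀ M : Matrix (Fin n) (Fin n) K, IsUnit M.det →
      MvPolynomial.eval (fun q => M q.1 q.2) p ≠ 0 →
      initialIdeal (Ideal.map (genLin M) I) = J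

/-- The set `G(J)` of (exponent vectors of) minimal monomial generators of a monomial
ideal `J`. -/
def minimalMonomialGens {σ : Type*} {K : Type*} [Field K] (J : Ideal (MvPolynomial σ K)) :
    Set (σ →₀ ℕ) :=
  {u | MvPolynomial.monomial u (1 : K) ∈ J ∧
    ∀ v : σ →₀ ℕ, v ≤ u → MvPolynomial.monomial v (1 : K) ∈ J → v = u}

/-- The squarefree operation `Φ` on exponent vectors:
`x_{i_1} x_{i_2} ⋯ x_{i_k} ↦ {i_1, i_2+1, …, i_k+k-1}` (`i_1 ≤ i_2 ≤ ⋯ ≤ i_k`). -/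
noncomputable def sqfreeOp {n : ℕ} (u : Fin n →₀ ℕ) : Finset ℕ :=
  (List.zipWith (· + ·)
      ((u.toMultiset.map (fun a : Fin n => (a : ℕ) + 1)).sort (· ≤ ·))
      (List.range (Multiset.card (u.toMultiset)))).toFinset

/-- `Δs` is the symmetric algebraic shifted complex of `Γ`: its Stanley–Reisner ideal is
`Φ(Gin(I_Γ))`, i.e. `Δs` consists of the `F ⊆ [n]` containing no `Φ(u)`, `u ∈ G(Gin(I_Γ))`. -/
def IsSymmetricShift (K : Type*) [Field K] (n : ℕ) (Γ Δs : Set (Finset ℕ)) : Prop :=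
  ∃ J : Ideal (MvPolynomial (Fin n) K), IsGin (srIdeal K n Γ) J ∧
    Δs = {F | F ⊆ Finset.Icc 1 n ∧ ∀ u ∈ minimalMonomialGens J, ¬ sqfreeOp u ⊆ F}

/-- The exponent vector (in `K[x_1,…,x_n]`) of a monomial given as a multiset. -/
noncomputable def multisetToExp (n : ℕ) (u : Multiset ℕ) : Fin n →₀ ℕ :=
  Finsupp.equivFunOnFinite.symm (fun a : Fin n => u.count ((a : ℕ) + 1))
/-! The exterior algebra `E = ⋀⟨e_1, e_2, …⟩` over `K`, exterior face ideals, the reverse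
lexicographic order, initial ideals and exterior algebraic shifting. We realize `E` as the
exterior algebra of the `K`-module `ℕ → K`, with `e_i` the image of `Pi.single i 1`. -/

/-- The exterior algebra `⋀ (ℕ → K)` hosting all the exterior face ideals. -/
abbrev ExtAlg (K : Type*) [Field K] := ExteriorAlgebra K (ℕ → K)

/-- The exterior monomial `e_F = e_{i_1} ∧ ⋯ ∧ e_{i_k}` for `F = {i_1 < ⋯ < i_k}`. -/
noncomputable def eMon (K : Type*) [Field K] (F : Finset ℕ) : ExtAlg K :=
  ((F.sort (· ≤ ·)).map (fun i => ExteriorAlgebra.ι K (Pi.single i (1 : K)))).prod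

/-- The exterior face ideal `J_Γ` of a complex `Γ` on the vertex set `V`, generated by the
monomials `e_F` with `F ⊆ V`, `F ∉ Γ`. -/
noncomputable def extFaceIdeal (K : Type*) [Field K] (V : Finset ℕ) (Γ : Set (Finset ℕ)) :
    Ideal (ExtAlg K) :=
  Ideal.span {x | ∃ F : Finset ℕ, F ⊆ V ∧ F ∉ Γ ∧ x = eMon K F}

/-- The alternating form computing the determinant of the coordinates indexed by `F`. -/
noncomputable def detCoeffAlt (K : Type*) [Field K] (F : Finset ℕ) :
    (ℕ → K) [⋀^Fin F.card]→ₗ[K] K :=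
  (Matrix.detRowAlternating).compLinearMap
    (LinearMap.funLeft K K (fun b : Fin F.card => ((F.orderIsoOfFin rfl b : F) : ℕ)))

/-- The coefficient functional of the basis monomial `e_F`: the linear functional on the
exterior algebra giving the coefficient of `e_F` in the monomial basis expansion. -/
noncomputable def extCoeff (K : Type*) [Field K] (F : Finset ℕ) : ExtAlg K →ₗ[K] K :=
  ExteriorAlgebra.liftAlternating
    (fun i => if h : i = F.card then (detCoeffAlt K F).domDomCongr (finCongr h.symm) else 0)

/-- The reverse lexicographic order (induced by `1 > 2 > ⋯`) on exterior monomials: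
`F < G` iff `|F| < |G|`, or the cardinalities agree and the largest element of the
symmetric difference `F Δ G` belongs to `F`. -/
def RevLexLT (F G : Finset ℕ) : Prop :=
  F.card < G.card ∨ (F.card = G.card ∧
    ∃ k, k ∈ F ∧ k ∉ G ∧ ∀ l, k < l → (l ∈ F ↔ l ∈ G))

/-- The initial ideal of an ideal `I` of the exterior algebra w.r.t. the reverse
lexicographic order: spanned by the leading monomials `e_F` of the elements of `I`. -/
noncomputable def extInitialIdeal (K : Type*) [Field K] (I : Ideal (ExtAlg K)) :
    Ideal (ExtAlg K) :=
  Ideal.span {x | ∃ y ∈ I, ∃ F : Finset ℕ, x = eMon K F ∧ extCoeff K F y ≠ 0 ∧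
    ∀ G : Finset ℕ, extCoeff K G y ≠ 0 → G ≠ F → RevLexLT G F}

/-- The linear change of coordinates of `span{e_i : i ∈ V}` (identity elsewhere)
associated with a `|V| × |V|` matrix `M`. -/
noncomputable def extLinMap (K : Type*) [Field K] (V : Finset ℕ)
    (M : Matrix (Fin V.card) (Fin V.card) K) : (ℕ → K) →ₗ[K] (ℕ → K) where
  toFun v k :=
    if h : k ∈ V then
      ∑ a : Fin V.card,
        M ((V.orderIsoOfFin rfl).symm ⟨k, h⟩) a * v ((V.orderIsoOfFin rfl a : V) : ℕ)
    else v k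
  map_add' x y := by
    funext k
    by_cases h : k ∈ V <;> simp [h, mul_add, Finset.sum_add_distrib]
  map_smul' c x := by
    funext k
    by_cases h : k ∈ V <;> simp [h, Finset.mul_sum, mul_left_comm]

/-- The algebra automorphism of the exterior algebra induced by `extLinMap`. -/
noncomputable def extAlgMap (K : Type*) [Field K] (V : Finset ℕ)
    (M : Matrix (Fin V.card) (Fin V.card) K) : ExtAlg K →ₐ[K] ExtAlg K :=
  ExteriorAlgebra.lift K ⟨(ExteriorAlgebra.ι K).comp (extLinMap K V M),
    fun _ => ExteriorAlgebra.ι_sq_zero _⟩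

/-- `Δe` is the exterior algebraic shifted complex of `Γ` (as complexes on the vertex set
`V`): `J_{Δe} = Gin(J_Γ)`, where the generic initial ideal is witnessed by a nonempty
Zariski open subset of `GL(V)` (the nonvanishing locus of a nonzero polynomial in the
matrix entries). -/
def IsExteriorShift (K : Type*) [Field K] (V : Finset ℕ) (Γ Δe : Set (Finset ℕ)) : Prop :=
  ∃ p : MvPolynomial (Fin V.card × Fin V.card) K, p ≠ 0 ∧
    ∀ M : Matrix (Fin V.card) (Fin V.card) K, IsUnit M.det →
      MvPolynomial.eval (fun q => M q.1 q.2) p ≠ 0 →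
      extInitialIdeal K (Ideal.map (extAlgMap K V M) (extFaceIdeal K V Γ)) =
        extFaceIdeal K V Δe

/-- The simplicial complex on `V` whose exterior face ideal is the (monomial) ideal `J`. -/
noncomputable def complexOfExtIdeal (K : Type*) [Field K] (V : Finset ℕ)
    (J : Ideal (ExtAlg K)) : Set (Finset ℕ) :=
  {F | F ⊆ V ∧ eMon K F ∉ J}

/-- Nongeneric exterior shifting `Δ_φ(Γ)`, defined by `J_{Δ_φ(Γ)} = in(φ(J_Γ))` for an
individual linear change of coordinates `φ` given by the matrix `M`. -/
noncomputable def DeltaPhi (K : Type*) [Field K] (V : Finset ℕ)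
    (M : Matrix (Fin V.card) (Fin V.card) K) (Γ : Set (Finset ℕ)) : Set (Finset ℕ) :=
  complexOfExtIdeal K V (extInitialIdeal K (Ideal.map (extAlgMap K V M) (extFaceIdeal K V Γ)))

/-- The shifting-theoretic upper bound relation for a `(d-1)`-dimensional complex `Γ` on the
vertex set `V`: `Δᵉ(Γ) ⊆ Δ(V,d)`. -/
def ShiftingUBR (K : Type*) [Field K] (V : Finset ℕ) (d : ℕ) (Γ : Set (Finset ℕ)) : Prop :=
  ∀ Δe, IsExteriorShift K V Γ Δe → Δe ⊆ DeltaV V d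
/-! Graded pieces, linear systems of parameters, the Cohen–Macaulay property and the strong
Lefschetz property for graded quotients `A = K[x_1,…,x_n]/I`. -/

/-- The degree-`k` homogeneous component of the graded quotient `S/I` (the image of the
degree-`k` homogeneous polynomials). -/
noncomputable def quotPiece {K : Type*} [Field K] {n : ℕ}
    (I : Ideal (MvPolynomial (Fin n) K)) (k : ℕ) :
    Submodule K (MvPolynomial (Fin n) K ⧸ I) :=
  (MvPolynomial.homogeneousSubmodule (Fin n) K k).map (Ideal.Quotient.mkₐ K I).toLinearMap

/-- `θ_1, …, θ_d` is a linear system of parameters of `S/I`: the `θ_a` are linear forms and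
the quotient `S/(I + (θ_1,…,θ_d))` has Krull dimension `≤ 0`. -/
def IsLSOP {K : Type*} [Field K] {n : ℕ} (I : Ideal (MvPolynomial (Fin n) K)) (d : ℕ)
    (θ : Fin d → MvPolynomial (Fin n) K) : Prop :=
  (∀ a, (θ a).IsHomogeneous 1) ∧
    ringKrullDim (MvPolynomial (Fin n) K ⧸ (I ⊔ Ideal.span (Set.range θ))) ≤ 0

set_option synthInstance.maxHeartbeats 1000000 in
/-- The graded quotient `A = S/I` is Cohen–Macaulay: a linear system of parameters of
length `d = dim A` forms a regular `A`-sequence. -/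
def IsCMIdeal {K : Type*} [Field K] {n : ℕ} (I : Ideal (MvPolynomial (Fin n) K)) : Prop :=
  ∃ d : ℕ, ringKrullDim (MvPolynomial (Fin n) K ⧸ I) = d ∧
    ∃ θ : Fin d → MvPolynomial (Fin n) K, IsLSOP I d θ ∧
      RingTheory.Sequence.IsRegular (MvPolynomial (Fin n) K ⧸ I)
        ((List.ofFn θ).map (⇑(Ideal.Quotient.mk I)))

/-- The graded quotient `A = S/I` has the strong Lefschetz property: `A` is Cohen–Macaulay
and there are an l.s.o.p. `θ_1, …, θ_d` (`d = dim A`) and a linear form `ω` such that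
`ω^{s-2i} : (A/θA)_i → (A/θA)_{s-i}` is bijective for `0 ≤ i ≤ s/2`, where
`s = max{k : (A/θA)_k ≠ 0}`. -/
def HasSLPIdeal {K : Type*} [Field K] {n : ℕ} (I : Ideal (MvPolynomial (Fin n) K)) : Prop :=
  IsCMIdeal I ∧
    ∃ d : ℕ, ringKrullDim (MvPolynomial (Fin n) K ⧸ I) = d ∧
      ∃ θ : Fin d → MvPolynomial (Fin n) K, IsLSOP I d θ ∧
        ∃ ω : MvPolynomial (Fin n) K, ω.IsHomogeneous 1 ∧
          ∃ s : ℕ,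
            (quotPiece (I ⊔ Ideal.span (Set.range θ)) s ≠ ⊥ ∧
              ∀ k, s < k → quotPiece (I ⊔ Ideal.span (Set.range θ)) k = ⊥) ∧
            ∀ i : ℕ, 2 * i ≤ s →
              Set.BijOn
                (fun x => (Ideal.Quotient.mk (I ⊔ Ideal.span (Set.range θ)) ω) ^ (s - 2 * i) * x)
                (quotPiece (I ⊔ Ideal.span (Set.range θ)) i)
                (quotPiece (I ⊔ Ideal.span (Set.range θ)) (s - i))

/-- A simplicial complex is Cohen–Macaulay over `K` if its Stanley–Reisner ring is. -/
def ComplexCM (K : Type*) [Field K] (n : ℕ) (Γ : Set (Finset ℕ)) : Prop :=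
  IsCMIdeal (srIdeal K n Γ)

/-- A `(d-1)`-dimensional complex `Γ` has the strong Lefschetz property if `h_d(Γ) > 0` and
its Stanley–Reisner ring has the strong Lefschetz property. -/
def ComplexSLP (K : Type*) [Field K] (n d : ℕ) (Γ : Set (Finset ℕ)) : Prop :=
  0 < hvec d Γ d ∧ HasSLPIdeal (srIdeal K n Γ)

/-- A `1`-dimensional simplicial sphere (a cycle): a complex all of whose faces are edges or
smaller, every vertex lying in exactly two edges, whose edge graph is connected. -/
def IsCycleComplex (V : Finset ℕ) (Γ : Set (Finset ℕ)) : Prop :=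
  SimplicialComplexOn V Γ ∧ (∀ F ∈ Γ, F.card ≤ 2) ∧
    (∀ v ∈ V, {e | e ∈ Γ ∧ e.card = 2 ∧ v ∈ e}.ncard = 2) ∧
    ∀ u ∈ V, ∀ v ∈ V,
      Relation.ReflTransGen (fun a b : ℕ => ({a, b} : Finset ℕ) ∈ Γ) u v

/-! The substitution `φ = φ_{ij}` fixes `x_F` when `j ∉ F`, sends `x_F` to `x_F + x_{F-j+i}`
(leading term `x_{F-j+i}`) when `j ∈ F ∌ i`, and sends `x_G - x_{G-j+i}` to `x_G`. By the
hypothesis no minimal nonface contains both `i` and `j`, so a nonface containing `i` and `j` stays a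
nonface after removing `i` or `j`; with this, the three computations give
`I_{Shift_{ij}(Γ)} ⊆ in(φ(I_Γ))`.

Conversely, let `x^u` be the leading monomial of some `f ∈ φ(I_Γ)` and `A` its support. For
every face `B` with `i ∈ B → j ∈ B`, `φ` preserves the ideal `(x_k : k ∉ B) ⊇ I_Γ`, so `A ⊄ B`.
This rules out `A ∈ Shift_{ij}(Γ)` except when `i ∉ A ∋ j` and `A - j + i ∈ Γ`. There, the
substitution `x_j ↦ -x_i` maps `φ(I_Γ)` into `I_Γ`, and because `x^u` is leading it maps the
coefficient of `x^u` in `f` to `±` the coefficient of `x^u x_i^{u_j} / x_j^{u_j}`, a monomial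
supported on `A - j + i`. -/

open MvPolynomial Finset

namespace StanleyReisner

section SquarefreeMonomials

variable {K : Type*} [CommRing K] {n : ℕ}

noncomputable def faceExp (n : ℕ) (F : Finset ℕ) : Fin n →₀ ℕ :=
  Finsupp.equivFunOnFinite.symm fun k => if (k : ℕ) + 1 ∈ F then 1 else 0

@[simp] lemma faceExp_apply (F : Finset ℕ) (k : Fin n) :
    faceExp n F k = if (k : ℕ) + 1 ∈ F then 1 else 0 := by
  simp [faceExp]

lemma faceMonomial_eq_monomial (F : Finset ℕ) :
    faceMonomial K n F = monomial (faceExp n F) 1 := by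
  have h : faceExp n F =
      ∑ k ∈ univ.filter (fun k : Fin n => (k : ℕ) + 1 ∈ F), Finsupp.single k 1 := by
    ext k
    simp [Finsupp.finsetSum_apply, Finsupp.single_apply]
  rw [faceMonomial, h, monomial_sum_one]
  rfl

lemma faceExp_mono {F G : Finset ℕ} (h : F ⊆ G) : faceExp n F ≤ faceExp n G := fun k => by
  simp only [faceExp_apply]
  split_ifs with hF hG <;> first | omega | exact absurd (h hF) hG

noncomputable def expSupport (v : Fin n →₀ ℕ) : Finset ℕ :=
  v.support.image fun k : Fin n => (k : ℕ) + 1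

lemma mem_expSupport {v : Fin n →₀ ℕ} {x : ℕ} :
    x ∈ expSupport v ↔ ∃ k : Fin n, v k ≠ 0 ∧ (k : ℕ) + 1 = x := by
  simp [expSupport]

lemma succ_mem_expSupport {v : Fin n →₀ ℕ} {k : Fin n} :
    (k : ℕ) + 1 ∈ expSupport v ↔ v k ≠ 0 := by
  rw [mem_expSupport]
  exact ⟨fun ⟨l, hl, hlk⟩ => Fin.ext (by omega : (l : ℕ) = k) ▸ hl, fun h => ⟨k, h, rfl⟩⟩

lemma expSupport_faceExp_subset (F : Finset ℕ) : expSupport (faceExp n F) ⊆ F := fun x hx => by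
  obtain ⟨k, hk, rfl⟩ := mem_expSupport.mp hx
  simpa using hk

lemma succ_mem_Icc (k : Fin n) : (k : ℕ) + 1 ∈ Icc 1 n := by
  simp [Nat.succ_le_of_lt k.isLt]

lemma faceExp_le_iff {F : Finset ℕ} (hF : F ⊆ Icc 1 n) {v : Fin n →₀ ℕ} :
    faceExp n F ≤ v ↔ F ⊆ expSupport v := by
  constructor
  · intro h x hx
    have hx' := mem_Icc.mp (hF hx)
    have hk := h ⟨x - 1, by omega⟩
    simp only [faceExp_apply, Nat.sub_add_cancel hx'.1, if_pos hx] at hk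
    exact mem_expSupport.mpr ⟨⟨x - 1, by omega⟩, by omega, by simp; omega⟩
  · intro h k
    rw [faceExp_apply]
    split_ifs with hk
    · exact Nat.one_le_iff_ne_zero.mpr (succ_mem_expSupport.mp (h hk))
    · exact Nat.zero_le _

lemma expSupport_subset_Icc (v : Fin n →₀ ℕ) : expSupport v ⊆ Icc 1 n := fun x hx => by
  obtain ⟨k, -, rfl⟩ := mem_expSupport.mp hx
  simp

lemma faceExp_expSupport_le (v : Fin n →₀ ℕ) : faceExp n (expSupport v) ≤ v :=
  (faceExp_le_iff (expSupport_subset_Icc v)).mpr subset_rfl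

lemma faceMonomial_mem_of_subset {I : Ideal (MvPolynomial (Fin n) K)} {F G : Finset ℕ}
    (hFG : F ⊆ G) (hF : faceMonomial K n F ∈ I) : faceMonomial K n G ∈ I := by
  rw [faceMonomial_eq_monomial] at hF ⊢
  rw [← add_tsub_cancel_of_le (faceExp_mono (n := n) hFG), ← mul_one (1 : K), ← monomial_mul]
  exact Ideal.mul_mem_right _ _ hF

variable (Γ : Set (Finset ℕ))

lemma mem_srIdeal_iff {p : MvPolynomial (Fin n) K} :
    p ∈ srIdeal K n Γ ↔ ∀ v ∈ p.support, ∃ F ⊆ Icc 1 n, F ∉ Γ ∧ faceExp n F ≤ v := by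
  have hgens : {f | ∃ F : Finset ℕ, F ⊆ Icc 1 n ∧ F ∉ Γ ∧ f = faceMonomial K n F} =
      (fun s => monomial s (1 : K)) '' {s | ∃ F ⊆ Icc 1 n, F ∉ Γ ∧ s = faceExp n F} := by
    ext f
    simp only [Set.mem_ofPred_eq, Set.mem_image, faceMonomial_eq_monomial]
    constructor
    · rintro ⟨F, hF, hFΓ, rfl⟩
      exact ⟨_, ⟨F, hF, hFΓ, rfl⟩, rfl⟩
    · rintro ⟨_, ⟨F, hF, hFΓ, rfl⟩, rfl⟩
      exact ⟨F, hF, hFΓ, rfl⟩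
  rw [srIdeal, hgens, mem_ideal_span_monomial_image]
  refine forall₂_congr fun v _ => ⟨?_, ?_⟩
  · rintro ⟨_, ⟨F, hF, hFΓ, rfl⟩, hle⟩
    exact ⟨F, hF, hFΓ, hle⟩
  · rintro ⟨F, hF, hFΓ, hle⟩
    exact ⟨_, ⟨F, hF, hFΓ, rfl⟩, hle⟩

variable {Γ}

lemma faceMonomial_mem_srIdeal {F : Finset ℕ} (hF : F ⊆ Icc 1 n) (hFΓ : F ∉ Γ) :
    faceMonomial K n F ∈ srIdeal K n Γ :=
  Ideal.subset_span ⟨F, hF, hFΓ, rfl⟩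

lemma monomial_mem_srIdeal {v : Fin n →₀ ℕ} (hv : expSupport v ∉ Γ) :
    monomial v (1 : K) ∈ srIdeal K n Γ := by
  rw [← add_tsub_cancel_of_le (faceExp_expSupport_le v), ← mul_one (1 : K), ← monomial_mul,
    ← faceMonomial_eq_monomial]
  exact Ideal.mul_mem_right _ _ (faceMonomial_mem_srIdeal (expSupport_subset_Icc v) hv)

lemma expSupport_notMem_of_mem_srIdeal (hΓ : IsLowerSet Γ) {p : MvPolynomial (Fin n) K}
    (hp : p ∈ srIdeal K n Γ) {v : Fin n →₀ ℕ} (hv : v ∈ p.support) : expSupport v ∉ Γ := by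
  obtain ⟨F, hF, hFΓ, hle⟩ := (mem_srIdeal_iff Γ).mp hp v hv
  exact fun h => hFΓ (hΓ ((faceExp_le_iff hF).mp hle) h)

lemma srIdeal_le_span_X (hΓ : IsLowerSet Γ) {B : Finset ℕ} (hB : B ∈ Γ) :
    srIdeal K n Γ ≤ Ideal.span (X '' {k : Fin n | (k : ℕ) + 1 ∉ B}) := by
  intro p hp
  rw [mem_ideal_span_X_image]
  intro v hv
  have hvB : ¬ expSupport v ⊆ B := fun h =>
    expSupport_notMem_of_mem_srIdeal hΓ hp hv (hΓ h hB)
  obtain ⟨x, hxv, hxB⟩ := not_subset.mp hvB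
  obtain ⟨k, hk, rfl⟩ := mem_expSupport.mp hxv
  exact ⟨k, hxB, hk⟩

end SquarefreeMonomials

section MinimalGenerators

variable {K : Type*} [Field K] {n : ℕ} {Γ : Set (Finset ℕ)}

lemma faceExp_mem_minimalMonomialGens {G : Finset ℕ} (hG : G ⊆ Icc 1 n)
    (hmin : Minimal (· ∉ Γ) G) : faceExp n G ∈ minimalMonomialGens (srIdeal K n Γ) := by
  refine ⟨faceMonomial_eq_monomial (K := K) G ▸ faceMonomial_mem_srIdeal hG hmin.prop,
    fun v hv hvmem => ?_⟩
  obtain ⟨F, hF, hFΓ, hFv⟩ := (mem_srIdeal_iff Γ).mp hvmem v (by simp)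
  have hFG : F ⊆ G :=
    ((faceExp_le_iff hF).mp (hFv.trans hv)).trans (expSupport_faceExp_subset G)
  obtain rfl : F = G := hFG.antisymm (hmin.2 hFΓ hFG)
  exact le_antisymm hv hFv

end MinimalGenerators

section Substitutions

variable {σ R : Type*} [DecidableEq σ]

lemma aeval_monomial_of_eq_X [CommSemiring R] {g : σ → MvPolynomial σ R} {b : σ}
    (hg : ∀ k ≠ b, g k = X k) (v : σ →₀ ℕ) (r : R) :
    aeval g (monomial v r) = monomial (v.erase b) r * g b ^ v b := by
  have hsplit : monomial v r = monomial (v.erase b) r * X b ^ v b := by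
    rw [X_pow_eq_monomial, monomial_mul, mul_one, Finsupp.erase_add_single]
  have hfix : aeval g (monomial (v.erase b) r) = monomial (v.erase b) r := by
    rw [aeval_monomial, monomial_eq, algebraMap_eq]
    congr 1
    refine Finsupp.prod_congr fun k hk => ?_
    rw [hg k]
    rintro rfl
    simp at hk
  rw [hsplit, map_mul, map_pow, hfix, aeval_X]

noncomputable def elemSubst [CommSemiring R] (a b : σ) : MvPolynomial σ R →ₐ[R] MvPolynomial σ R :=
  aeval fun k => if k = b then X a + X k else X k

noncomputable def foldSubst [CommRing R] (a b : σ) : MvPolynomial σ R →ₐ[R] MvPolynomial σ R :=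
  aeval fun k => if k = b then -X a else X k

noncomputable def foldExp (a b : σ) (v : σ →₀ ℕ) : σ →₀ ℕ :=
  v.erase b + Finsupp.single a (v b)

lemma elemSubst_monomial_of_eq_zero [CommSemiring R] {a b : σ} {v : σ →₀ ℕ} (hv : v b = 0)
    (r : R) : elemSubst a b (monomial v r) = monomial v r := by
  rw [elemSubst, aeval_monomial_of_eq_X (fun k hk => if_neg hk), hv, pow_zero, mul_one,
    Finsupp.erase_of_notMem_support (by simpa using hv)]

lemma elemSubst_monomial_of_eq_one [CommSemiring R] {a b : σ} {v : σ →₀ ℕ} (hv : v b = 1)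
    (r : R) : elemSubst a b (monomial v r) = monomial v r + monomial (foldExp a b v) r := by
  rw [elemSubst, aeval_monomial_of_eq_X (fun k hk => if_neg hk), hv, pow_one, if_pos rfl,
    mul_add, X, X, monomial_mul, monomial_mul, mul_one, foldExp, hv, add_comm]
  congr
  rw [← hv, Finsupp.erase_add_single]

lemma foldSubst_monomial [CommRing R] (a b : σ) (v : σ →₀ ℕ) (r : R) :
    foldSubst a b (monomial v r) = monomial (foldExp a b v) ((-1) ^ v b * r) := by
  rw [foldSubst, aeval_monomial_of_eq_X (fun k hk => if_neg hk), if_pos rfl, neg_pow,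
    X_pow_eq_monomial, ← map_one C, ← map_neg C, ← map_pow C, C_mul_monomial, monomial_mul,
    foldExp, mul_one, mul_comm]

lemma foldSubst_comp_elemSubst [CommRing R] {a b : σ} (hab : a ≠ b) :
    (foldSubst a b).comp (elemSubst a b) =
      aeval fun k => if k = b then (0 : MvPolynomial σ R) else X k := by
  refine algHom_ext fun k => ?_
  by_cases hk : k = b
  · subst hk
    simp [foldSubst, elemSubst, hab]
  · simp [foldSubst, elemSubst, hk]

end Substitutions

section DegRevLex

variable {σ : Type*} {a b : σ}

lemma foldExp_apply_left (hab : a ≠ b) (v : σ →₀ ℕ) : foldExp a b v a = v a + v b := by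
  simp [foldExp, Finsupp.erase_ne hab]

lemma foldExp_apply_right (hab : a ≠ b) (v : σ →₀ ℕ) : foldExp a b v b = 0 := by
  simp [foldExp, Finsupp.single_eq_of_ne hab.symm]

lemma foldExp_apply_of_ne {k : σ} (hka : k ≠ a) (hkb : k ≠ b) (v : σ →₀ ℕ) :
    foldExp a b v k = v k := by
  simp [foldExp, Finsupp.erase_ne hkb, Finsupp.single_eq_of_ne hka]

lemma degree_foldExp (v : σ →₀ ℕ) : (foldExp a b v).degree = v.degree := by
  conv_rhs => rw [← Finsupp.erase_add_single b v]
  simp only [foldExp, map_add, Finsupp.degree_single]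

variable [LinearOrder σ]

lemma DegRevLexLT.asymm {u v : σ →₀ ℕ} (huv : DegRevLexLT u v) : ¬ DegRevLexLT v u := by
  rintro (hvu | ⟨hdeg', k', hk', hagree'⟩) <;> rcases huv with huv | ⟨hdeg, k, hk, hagree⟩
  · omega
  · omega
  · omega
  · rcases lt_trichotomy k k' with h | rfl | h
    · have := hagree k' h
      omega
    · omega
    · have := hagree' k h
      omega

lemma degRevLexLT_foldExp (hab : a < b) {v : σ →₀ ℕ} (hv : v b ≠ 0) :
    DegRevLexLT v (foldExp a b v) := by
  refine Or.inr ⟨(degree_foldExp v).symm, b, ?_, fun l hl => ?_⟩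
  · rw [foldExp_apply_right hab.ne]
    omega
  · rw [foldExp_apply_of_ne (hab.trans hl).ne' hl.ne']

lemma degRevLexLT_of_foldExp_eq (hab : a < b) {u v : σ →₀ ℕ} (hua : u a = 0)
    (h : foldExp a b v = foldExp a b u) (hne : v ≠ u) : DegRevLexLT u v := by
  have hsum : v a + v b = u b := by
    simpa [foldExp_apply_left hab.ne, hua] using DFunLike.congr_fun h a
  have hrest : ∀ k, k ≠ a → k ≠ b → v k = u k := fun k hka hkb => by
    simpa [foldExp_apply_of_ne hka hkb] using DFunLike.congr_fun h k
  have hvb : v b < u b := by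
    refine lt_of_le_of_ne (by omega) fun hvb => hne (Finsupp.ext fun k => ?_)
    by_cases hka : k = a
    · subst hka; omega
    by_cases hkb : k = b
    · subst hkb; exact hvb
    exact hrest k hka hkb
  have hdeg : u.degree = v.degree := by
    rw [← degree_foldExp (a := a) (b := b) u, ← h, degree_foldExp]
  exact Or.inr ⟨hdeg, b, hvb, fun l hl => (hrest l (hab.trans hl).ne' hl.ne').symm⟩

lemma coeff_foldSubst_foldExp {R : Type*} [CommRing R] [DecidableEq σ] (hab : a < b)
    {f : MvPolynomial σ R} {u : σ →₀ ℕ} (hua : u a = 0)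
    (hlead : ∀ v ∈ f.support, v ≠ u → DegRevLexLT v u) :
    coeff (foldExp a b u) (foldSubst a b f) = (-1) ^ u b * coeff u f := by
  conv_lhs => rw [← support_sum_monomial_coeff f]
  simp only [map_sum, coeff_sum, foldSubst_monomial, coeff_monomial]
  rw [Finset.sum_eq_single u]
  · simp
  · intro v hv hne
    exact if_neg fun h =>
      DegRevLexLT.asymm (hlead v hv hne) (degRevLexLT_of_foldExp_eq hab hua h hne)
  · intro hu
    simp [notMem_support_iff.mp hu]

end DegRevLex

section InitialIdeal

variable {σ K : Type*} [LinearOrder σ] [Field K] {I : Ideal (MvPolynomial σ K)}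

lemma monomial_mem_initialIdeal {u : σ →₀ ℕ} (hu : monomial u (1 : K) ∈ I) :
    monomial u (1 : K) ∈ initialIdeal I :=
  Ideal.subset_span ⟨_, hu, u, by simp, rfl, fun v hv hne => by simp_all⟩

lemma monomial_mem_initialIdeal_of_add_mem {v w : σ →₀ ℕ} (hvw : DegRevLexLT v w)
    (h : monomial v (1 : K) + monomial w 1 ∈ I) : monomial w (1 : K) ∈ initialIdeal I := by
  have hne : v ≠ w := fun h => DegRevLexLT.asymm hvw (h ▸ hvw)
  refine Ideal.subset_span ⟨_, h, w, ?_, rfl, fun u hu huw => ?_⟩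
  · simp [mem_support_iff, coeff_monomial, hne]
  · rcases Finset.mem_union.mp (support_add hu) with h | h <;>
      obtain rfl := mem_singleton.mp (support_monomial_subset h)
    · exact hvw
    · exact absurd rfl huw

end InitialIdeal

section ShiftComplex

variable {Γ : Set (Finset ℕ)} {i j : ℕ} {A : Finset ℕ}

lemma mem_shiftComplex_of_mem (hij : i ≠ j) (hiA : i ∈ A) :
    A ∈ shiftComplex Γ i j ↔ A ∈ Γ ∧ (j ∈ A ∨ insert j (A.erase i) ∈ Γ) := by
  constructor
  · rintro ⟨F, hF, rfl⟩
    unfold shiftMap at hiA ⊢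
    rw [union_singleton] at hiA ⊢
    split_ifs at hiA ⊢ with hc
    · simp [hij] at hiA
    · tauto
  · rintro ⟨hA, hj⟩
    refine ⟨A, hA, ?_⟩
    rw [shiftMap, union_singleton, if_neg (by tauto)]

lemma mem_shiftComplex_of_notMem (hij : i ≠ j) (hiA : i ∉ A) :
    A ∈ shiftComplex Γ i j ↔ A ∈ Γ ∨ (j ∈ A ∧ insert i (A.erase j) ∈ Γ) := by
  constructor
  · rintro ⟨F, hF, rfl⟩
    unfold shiftMap at hiA ⊢
    rw [union_singleton] at hiA ⊢
    split_ifs at hiA ⊢ with hc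
    · obtain ⟨hiF, hjF, -⟩ := hc
      rw [erase_insert (by simp [hjF]), insert_erase hiF]
      exact Or.inr ⟨mem_insert_self _ _, hF⟩
    · exact Or.inl hF
  · rintro (hA | ⟨hjA, hH⟩)
    · exact ⟨A, hA, by rw [shiftMap, if_neg (by tauto)]⟩
    by_cases hA : A ∈ Γ
    · exact ⟨A, hA, by rw [shiftMap, if_neg (by tauto)]⟩
    have hback : insert j ((insert i (A.erase j)).erase i) = A := by
      rw [erase_insert (by simp [hiA]), insert_erase hjA]
    refine ⟨_, hH, ?_⟩
    rw [shiftMap, union_singleton, hback, if_pos ⟨mem_insert_self _ _, by simp [hij.symm], hA⟩]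

lemma erase_notMem_or_erase_notMem (hΓ : IsLowerSet Γ) {F : Finset ℕ} (hF : F ∉ Γ)
    (hmin : ∀ G ⊆ F, Minimal (· ∉ Γ) G → i ∉ G ∨ j ∉ G) :
    F.erase i ∉ Γ ∨ F.erase j ∉ Γ := by
  obtain ⟨G, hGF, hG⟩ := exists_minimal_le_of_wellFoundedLT (· ∉ Γ) F hF
  exact (hmin G hGF hG).imp (fun hi h => hG.prop (hΓ (subset_erase.mpr ⟨hGF, hi⟩) h))
    (fun hj h => hG.prop (hΓ (subset_erase.mpr ⟨hGF, hj⟩) h))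

end ShiftComplex

section ElementarySubstitution

variable {K : Type*} [Field K] {n : ℕ} {Γ : Set (Finset ℕ)} {a b : Fin n}

lemma foldExp_faceExp (hab : a ≠ b) {F : Finset ℕ} (ha : (a : ℕ) + 1 ∉ F)
    (hb : (b : ℕ) + 1 ∈ F) :
    foldExp a b (faceExp n F) = faceExp n (insert ((a : ℕ) + 1) (F.erase ((b : ℕ) + 1))) := by
  ext k
  by_cases hka : k = a
  · subst hka
    simp [foldExp_apply_left hab, ha, hb]
  by_cases hkb : k = b
  · subst hkb
    simp [foldExp_apply_right hab, Fin.val_ne_of_ne hab.symm]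
  simp [foldExp_apply_of_ne hka hkb, Fin.val_ne_of_ne hka, Fin.val_ne_of_ne hkb]

lemma elemSubst_faceMonomial_of_notMem {F : Finset ℕ} (hb : (b : ℕ) + 1 ∉ F) :
    elemSubst a b (faceMonomial K n F) = faceMonomial K n F := by
  rw [faceMonomial_eq_monomial, elemSubst_monomial_of_eq_zero (by simp [hb])]

lemma elemSubst_faceMonomial_of_mem (hab : a ≠ b) {F : Finset ℕ} (ha : (a : ℕ) + 1 ∉ F)
    (hb : (b : ℕ) + 1 ∈ F) :
    elemSubst a b (faceMonomial K n F) =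
      faceMonomial K n F + faceMonomial K n (insert ((a : ℕ) + 1) (F.erase ((b : ℕ) + 1))) := by
  rw [faceMonomial_eq_monomial, elemSubst_monomial_of_eq_one (by simp [hb]),
    foldExp_faceExp hab ha hb, faceMonomial_eq_monomial]

lemma expSupport_foldExp_subset (hab : a ≠ b) (u : Fin n →₀ ℕ) :
    expSupport (foldExp a b u) ⊆ insert ((a : ℕ) + 1) ((expSupport u).erase ((b : ℕ) + 1)) := by
  intro x hx
  obtain ⟨k, hk, rfl⟩ := mem_expSupport.mp hx
  by_cases hka : k = a
  · subst hka
    exact mem_insert_self _ _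
  have hkb : k ≠ b := fun h => hk (h ▸ foldExp_apply_right hab u)
  rw [foldExp_apply_of_ne hka hkb] at hk
  exact mem_insert_of_mem (mem_erase.mpr ⟨by simpa using Fin.val_ne_of_ne hkb,
    succ_mem_expSupport.mpr hk⟩)

lemma not_expSupport_subset_of_mem_map (hΓ : IsLowerSet Γ) {B : Finset ℕ} (hB : B ∈ Γ)
    (hBab : (a : ℕ) + 1 ∈ B → (b : ℕ) + 1 ∈ B) {f : MvPolynomial (Fin n) K}
    (hf : f ∈ Ideal.map (elemSubst a b) (srIdeal K n Γ)) {u : Fin n →₀ ℕ} (hu : u ∈ f.support) :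
    ¬ expSupport u ⊆ B := by
  have hJ : Ideal.map (elemSubst a b) (srIdeal K n Γ) ≤
      Ideal.span (X '' {k : Fin n | (k : ℕ) + 1 ∉ B}) := by
    refine (Ideal.map_mono (srIdeal_le_span_X hΓ hB)).trans ?_
    rw [Ideal.map_span, Ideal.span_le]
    rintro _ ⟨_, ⟨k, hk, rfl⟩, rfl⟩
    simp only [elemSubst, aeval_X]
    split_ifs with hkb
    · subst hkb
      exact add_mem (Ideal.subset_span ⟨a, mt hBab hk, rfl⟩) (Ideal.subset_span ⟨_, hk, rfl⟩)
    · exact Ideal.subset_span ⟨k, hk, rfl⟩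
  obtain ⟨k, hkB, hk⟩ := mem_ideal_span_X_image.mp (hJ hf) u hu
  exact fun h => hkB (h (succ_mem_expSupport.mpr hk))

lemma map_foldSubst_map_elemSubst_srIdeal_le (hab : a ≠ b) :
    Ideal.map (foldSubst a b) (Ideal.map (elemSubst a b) (srIdeal K n Γ)) ≤ srIdeal K n Γ := by
  rw [Ideal.map_le_iff_le_comap, Ideal.map_le_iff_le_comap, srIdeal, Ideal.span_le]
  rintro _ ⟨F, hF, hFΓ, rfl⟩
  change ((foldSubst a b).comp (elemSubst a b)) (faceMonomial K n F) ∈ srIdeal K n Γ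
  rw [foldSubst_comp_elemSubst hab, faceMonomial_eq_monomial,
    aeval_monomial_of_eq_X (fun k hk => if_neg hk), if_pos rfl]
  by_cases hb : (b : ℕ) + 1 ∈ F
  · simp [hb]
  · have hFb : faceExp n F b = 0 := by simp [hb]
    rw [Finsupp.erase_of_notMem_support (by simpa using hFb), hFb, pow_zero, mul_one,
      ← faceMonomial_eq_monomial]
    exact faceMonomial_mem_srIdeal hF hFΓ

end ElementarySubstitution

section InitialIdealOfShift

variable {K : Type*} [Field K] {n : ℕ} {Γ : Set (Finset ℕ)} {a b : Fin n}

lemma faceMonomial_mem_initialIdeal_of_notMem {F : Finset ℕ} (hF : F ⊆ Icc 1 n) (hFΓ : F ∉ Γ)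
    (hb : (b : ℕ) + 1 ∉ F) :
    faceMonomial K n F ∈ initialIdeal (Ideal.map (elemSubst a b) (srIdeal K n Γ)) := by
  have h := Ideal.mem_map_of_mem (elemSubst a b) (faceMonomial_mem_srIdeal (K := K) hF hFΓ)
  rw [elemSubst_faceMonomial_of_notMem hb, faceMonomial_eq_monomial] at h
  rw [faceMonomial_eq_monomial]
  exact monomial_mem_initialIdeal h

lemma faceMonomial_insert_erase_mem_initialIdeal (hab : a < b) {F : Finset ℕ}
    (hF : F ⊆ Icc 1 n) (hFΓ : F ∉ Γ) (ha : (a : ℕ) + 1 ∉ F) (hb : (b : ℕ) + 1 ∈ F) :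
    faceMonomial K n (insert ((a : ℕ) + 1) (F.erase ((b : ℕ) + 1))) ∈
      initialIdeal (Ideal.map (elemSubst a b) (srIdeal K n Γ)) := by
  have h := Ideal.mem_map_of_mem (elemSubst a b) (faceMonomial_mem_srIdeal (K := K) hF hFΓ)
  rw [elemSubst_faceMonomial_of_mem hab.ne ha hb, faceMonomial_eq_monomial,
    faceMonomial_eq_monomial, ← foldExp_faceExp hab.ne ha hb] at h
  rw [faceMonomial_eq_monomial, ← foldExp_faceExp hab.ne ha hb]
  exact monomial_mem_initialIdeal_of_add_mem (degRevLexLT_foldExp hab (by simp [hb])) h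

lemma faceMonomial_mem_initialIdeal_of_insert_erase_notMem (hab : a ≠ b) {G : Finset ℕ}
    (hG : G ⊆ Icc 1 n) (hGΓ : G ∉ Γ) (ha : (a : ℕ) + 1 ∉ G) (hb : (b : ℕ) + 1 ∈ G)
    (hH : insert ((a : ℕ) + 1) (G.erase ((b : ℕ) + 1)) ∉ Γ) :
    faceMonomial K n G ∈ initialIdeal (Ideal.map (elemSubst a b) (srIdeal K n Γ)) := by
  have hHn : insert ((a : ℕ) + 1) (G.erase ((b : ℕ) + 1)) ⊆ Icc 1 n :=
    insert_subset (succ_mem_Icc a) ((erase_subset _ _).trans hG)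
  have hbH : (b : ℕ) + 1 ∉ insert ((a : ℕ) + 1) (G.erase ((b : ℕ) + 1)) := by
    simpa using Fin.val_ne_of_ne hab.symm
  have h := Ideal.mem_map_of_mem (elemSubst a b)
    (sub_mem (faceMonomial_mem_srIdeal (K := K) hG hGΓ) (faceMonomial_mem_srIdeal hHn hH))
  rw [map_sub, elemSubst_faceMonomial_of_mem hab ha hb, elemSubst_faceMonomial_of_notMem hbH,
    add_sub_cancel_right, faceMonomial_eq_monomial] at h
  rw [faceMonomial_eq_monomial]
  exact monomial_mem_initialIdeal h

theorem srIdeal_shiftComplex_le_initialIdeal (hab : a < b)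
    (herase : ∀ F ⊆ Icc 1 n, F ∉ Γ → F.erase ((a : ℕ) + 1) ∉ Γ ∨ F.erase ((b : ℕ) + 1) ∉ Γ) :
    srIdeal K n (shiftComplex Γ ((a : ℕ) + 1) ((b : ℕ) + 1)) ≤
      initialIdeal (Ideal.map (elemSubst a b) (srIdeal K n Γ)) := by
  have hij : (a : ℕ) + 1 ≠ (b : ℕ) + 1 := by simpa using Fin.val_ne_of_ne hab.ne
  refine Ideal.span_le.mpr ?_
  rintro _ ⟨G, hG, hGS, rfl⟩
  by_cases hiG : (a : ℕ) + 1 ∈ G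
  · rw [mem_shiftComplex_of_mem hij hiG] at hGS
    by_cases hjG : (b : ℕ) + 1 ∈ G
    · have hGΓ : G ∉ Γ := fun h => hGS ⟨h, Or.inl hjG⟩
      refine faceMonomial_mem_of_subset (erase_subset ((b : ℕ) + 1) G) ?_
      rcases herase G hG hGΓ with hi | hj
      · have h := faceMonomial_insert_erase_mem_initialIdeal (K := K) hab
          ((erase_subset _ _).trans hG) hi (notMem_erase _ _) (mem_erase.mpr ⟨hij.symm, hjG⟩)
        rwa [erase_right_comm, insert_erase (mem_erase.mpr ⟨hij, hiG⟩)] at h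
      · exact faceMonomial_mem_initialIdeal_of_notMem ((erase_subset _ _).trans hG) hj
          (notMem_erase _ _)
    · by_cases hGΓ : G ∈ Γ
      · have hF : insert ((b : ℕ) + 1) (G.erase ((a : ℕ) + 1)) ∉ Γ :=
          fun h => hGS ⟨hGΓ, Or.inr h⟩
        have h := faceMonomial_insert_erase_mem_initialIdeal (K := K) hab
          (insert_subset (succ_mem_Icc b) ((erase_subset _ _).trans hG)) hF
          (by simp [Fin.val_ne_of_ne hab.ne]) (mem_insert_self _ _)
        rwa [erase_insert (by simp [hjG]), insert_erase hiG] at h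
      · exact faceMonomial_mem_initialIdeal_of_notMem hG hGΓ hjG
  · rw [mem_shiftComplex_of_notMem hij hiG] at hGS
    rw [not_or, not_and] at hGS
    by_cases hjG : (b : ℕ) + 1 ∈ G
    · exact faceMonomial_mem_initialIdeal_of_insert_erase_notMem hab.ne hG hGS.1 hiG hjG
        (hGS.2 hjG)
    · exact faceMonomial_mem_initialIdeal_of_notMem hG hGS.1 hjG

theorem initialIdeal_map_elemSubst_le (hab : a < b)
    (herase : ∀ F ⊆ Icc 1 n, F ∉ Γ → F.erase ((a : ℕ) + 1) ∉ Γ ∨ F.erase ((b : ℕ) + 1) ∉ Γ)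
    (hΓ : IsLowerSet Γ) :
    initialIdeal (Ideal.map (elemSubst a b) (srIdeal K n Γ)) ≤
      srIdeal K n (shiftComplex Γ ((a : ℕ) + 1) ((b : ℕ) + 1)) := by
  have hij : (a : ℕ) + 1 ≠ (b : ℕ) + 1 := by simpa using Fin.val_ne_of_ne hab.ne
  refine Ideal.span_le.mpr ?_
  rintro _ ⟨f, hf, u, hu, rfl, hlead⟩
  refine monomial_mem_srIdeal fun hA => ?_
  by_cases hua : u a = 0
  · have hiA : (a : ℕ) + 1 ∉ expSupport u := fun h => succ_mem_expSupport.mp h hua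
    rcases (mem_shiftComplex_of_notMem hij hiA).mp hA with hAΓ | ⟨-, hC⟩
    · exact not_expSupport_subset_of_mem_map hΓ hAΓ (absurd · hiA) hf hu subset_rfl
    have hg := map_foldSubst_map_elemSubst_srIdeal_le hab.ne
      (Ideal.mem_map_of_mem (foldSubst a b) hf)
    have hz : foldExp a b u ∈ (foldSubst a b f).support := by
      rw [mem_support_iff, coeff_foldSubst_foldExp hab hua hlead]
      exact mul_ne_zero (pow_ne_zero _ (neg_ne_zero.mpr one_ne_zero)) (mem_support_iff.mp hu)
    exact expSupport_notMem_of_mem_srIdeal hΓ hg hz (hΓ (expSupport_foldExp_subset hab.ne u) hC)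
  · have hiA : (a : ℕ) + 1 ∈ expSupport u := succ_mem_expSupport.mpr hua
    obtain ⟨hAΓ, hjA⟩ := (mem_shiftComplex_of_mem hij hiA).mp hA
    have hB : insert ((b : ℕ) + 1) (expSupport u) ∈ Γ := by
      by_cases hjA' : (b : ℕ) + 1 ∈ expSupport u
      · rwa [insert_eq_of_mem hjA']
      by_contra hB
      rcases herase _ (insert_subset (succ_mem_Icc b) (expSupport_subset_Icc u)) hB with h | h
      · rw [erase_insert_of_ne hij.symm] at h
        exact h (hjA.resolve_left hjA')
      · rw [erase_insert hjA'] at h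
        exact h hAΓ
    exact not_expSupport_subset_of_mem_map hΓ hB (fun _ => mem_insert_self _ _) hf hu
      (subset_insert _ _)

theorem initialIdeal_map_elemSubst_srIdeal (hab : a < b)
    (herase : ∀ F ⊆ Icc 1 n, F ∉ Γ → F.erase ((a : ℕ) + 1) ∉ Γ ∨ F.erase ((b : ℕ) + 1) ∉ Γ)
    (hΓ : IsLowerSet Γ) :
    initialIdeal (Ideal.map (elemSubst a b) (srIdeal K n Γ)) =
      srIdeal K n (shiftComplex Γ ((a : ℕ) + 1) ((b : ℕ) + 1)) :=
  le_antisymm (initialIdeal_map_elemSubst_le hab herase hΓ)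
    (srIdeal_shiftComplex_le_initialIdeal hab herase)

end InitialIdealOfShift

end StanleyReisner

open StanleyReisner in
/-- Lemma 2.2. If `I_Γ` has no minimal monomial generator divisible by
`x_i x_j`, then `in(φ_{ij}(I_Γ)) = I_{Shift_{ij}(Γ)}` w.r.t. the degree reverse
lexicographic order, where `φ_{ij}` maps `x_j ↦ x_i + x_j` and fixes the other variables. -/
theorem stmt3 (K : Type) [Field K] (n i j : ℕ) (hi : 1 ≤ i) (hij : i < j) (hj : j ≤ n)
    (Γ : Set (Finset ℕ)) (hΓ : SimplicialComplexOn (Finset.Icc 1 n) Γ)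
    (hgen : ∀ u ∈ minimalMonomialGens (srIdeal K n Γ),
      ¬ (0 < u ⟨i - 1, by omega⟩ ∧ 0 < u ⟨j - 1, by omega⟩)) :
    initialIdeal
        (Ideal.map
          (MvPolynomial.aeval (R := K) (fun k : Fin n =>
            if k = (⟨j - 1, by omega⟩ : Fin n) then
              MvPolynomial.X (⟨i - 1, by omega⟩ : Fin n) + MvPolynomial.X k
            else MvPolynomial.X k) :
              MvPolynomial (Fin n) K →ₐ[K] MvPolynomial (Fin n) K)
          (srIdeal K n Γ)) =
      srIdeal K n (shiftComplex Γ i j) := by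
  set a : Fin n := ⟨i - 1, by omega⟩
  set b : Fin n := ⟨j - 1, by omega⟩
  have hia : (a : ℕ) + 1 = i := by simp only [a]; omega
  have hjb : (b : ℕ) + 1 = j := by simp only [b]; omega
  have hΓ' : IsLowerSet Γ := fun F G hGF hF => hΓ.2.2 F hF G hGF
  have herase (F) (hF : F ⊆ Icc 1 n) (hFΓ : F ∉ Γ) : F.erase i ∉ Γ ∨ F.erase j ∉ Γ := by
    refine erase_notMem_or_erase_notMem hΓ' hFΓ fun G hGF hG => ?_
    have h := hgen _ (faceExp_mem_minimalMonomialGens (hGF.trans hF) hG)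
    simp only [faceExp_apply, hia, hjb] at h
    by_contra! hboth
    simp [hboth] at h
  rw [← hia, ← hjb] at herase ⊢
  exact initialIdeal_map_elemSubst_srIdeal (Fin.mk_lt_mk.mpr (by omega)) herase hΓ'
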